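/- arXiv:2009.13558 — 4 statements merged into one kernel-verified Lean document; each statement's English description precedes it below -/
import Mathlib

section
/- In the ring ℤ[u^{±1}] of Laurent polynomials over ℤ, let D be the 2×3 matrix with first row (−1, 1−u^{−1}, −1) and second row (1−u^{−1}, −u^{−1}, 1−u^{−1}). For every d ∈ ℤ[u^{±1}], d divides all three 2×2 minors of D if and only if d divides 1−3u+u². In other words, the greatest common divisor of the maximal minors of D is, up to multiplication by a unit of ℤ[u^{±1}], equal to 1−3u+u². -/
open LaurentPolynomial

/-- The reduced presentation matrix `D^L_Y` of the taut module of the veering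
triangulation `cPcbbbiht_12` of the figure-eight knot complement. -/
noncomputable def tautMatrix : Matrix (Fin 2) (Fin 3) (LaurentPolynomial ℤ) :=
  !![-1, 1 - T (-1), -1;
     1 - T (-1), -(T (-1)), 1 - T (-1)]

lemma taut_key : T (-2 : ℤ) * ((1 : LaurentPolynomial ℤ) - 3 * T 1 + T 2) =
    1 - 3 * T (-1 : ℤ) + T (-2 : ℤ) := by
  rw [mul_add, mul_sub, mul_one, mul_left_comm, ← T_add, ← T_add]
  norm_num
  ring

/-- The gcd of the maximal minors of `D^L_Y` — i.e. the taut polynomial of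
`cPcbbbiht_12` — is `1 - 3u + u²` up to a unit: an element of `ℤ[u^{±1}]`
divides all three `2 × 2` minors if and only if it divides `1 - 3u + u²`. -/
theorem taut_polynomial_cPcbbbiht :
    ∀ d : LaurentPolynomial ℤ,
      (d ∣ (tautMatrix.submatrix id ![0, 1]).det ∧
       d ∣ (tautMatrix.submatrix id ![0, 2]).det ∧
       d ∣ (tautMatrix.submatrix id ![1, 2]).det) ↔
      d ∣ (1 - 3 * T 1 + T 2) := by
  have hTT : (T (-1 : ℤ) * T (-1 : ℤ) : LaurentPolynomial ℤ) = T (-2 : ℤ) := by rw [← T_add]; norm_num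
  have h01 : (tautMatrix.submatrix id ![0, 1]).det =
      -(T (-2 : ℤ) * ((1 : LaurentPolynomial ℤ) - 3 * T 1 + T 2)) := by
    rw [taut_key]
    simp [tautMatrix, Matrix.det_fin_two]
    ring_nf
    rw [← hTT]
    ring
  have h02 : (tautMatrix.submatrix id ![0, 2]).det = 0 := by
    simp [tautMatrix, Matrix.det_fin_two]
  have h12 : (tautMatrix.submatrix id ![1, 2]).det =
      T (-2 : ℤ) * ((1 : LaurentPolynomial ℤ) - 3 * T 1 + T 2) := by
    rw [taut_key]
    simp [tautMatrix, Matrix.det_fin_two]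
    ring_nf
    rw [← hTT]
    ring
  intro d
  rw [h01, h02, h12]
  constructor
  · rintro ⟨-, -, h⟩
    have := h.mul_left (T (2 : ℤ))
    rwa [← mul_assoc, ← T_add, show (2 : ℤ) + (-2) = 0 by norm_num, T_zero,
      one_mul] at this
  · intro h
    exact ⟨(h.mul_left _).neg_right, dvd_zero _, h.mul_left _⟩
end

section
/- In the Laurent polynomial ring ℤ[u^{±1}, v^{±1}] in two variables over ℤ, every common divisor of the two elements 1−uv and 1−u is a unit; yet under the ring homomorphism ρ : ℤ[u^{±1}, v^{±1}] → ℤ[w^{±1}] determined by u ↦ w and v ↦ 1, both elements are sent to 1−w, which is not a unit of ℤ[w^{±1}]. Hence the greatest common divisor of {1−uv, 1−u} is 1 while the greatest common divisor of their images is 1−w, so the image under ρ of the gcd is a proper divisor of the gcd of the images. -/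
/-!
Since `1 - v = (1 - uv) - v (1 - u)`, a common divisor `d` of `1 - uv` and `1 - u` also divides
`1 - v`. Over a domain, the largest and smallest exponents of a product (for a linear order on the
exponents) are sums of those of the factors, so a monotone additive character that is constant on
the support of a nonzero product is constant on the support of each factor. With `ℤ²` ordered
lexicographically, the `u`-exponent is constant on the support of `1 - v`, and with the
coordinates swapped, the `v`-exponent is constant on the support of `1 - u`; hence `d` is a
monomial, and a monomial dividing `1 - u` is a unit. On the other side, `1 - w` evaluates to `0`
at `w = 1`.
-/

open LaurentPolynomial

/-- The two-variable Laurent polynomial ring `ℤ[u^{±1}, v^{±1}]`. -/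
noncomputable abbrev LaurentTwo : Type := AddMonoidAlgebra ℤ (ℤ × ℤ)

/-- The variable `u` of `ℤ[u^{±1}, v^{±1}]`. -/
noncomputable def uVar : LaurentTwo := AddMonoidAlgebra.single ((1 : ℤ), (0 : ℤ)) (1 : ℤ)

/-- The variable `v` of `ℤ[u^{±1}, v^{±1}]`. -/
noncomputable def vVar : LaurentTwo := AddMonoidAlgebra.single ((0 : ℤ), (1 : ℤ)) (1 : ℤ)

/-- The reduction `ρ : ℤ[u^{±1}, v^{±1}] → ℤ[w^{±1}]`, `u ↦ w`, `v ↦ 1`. -/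
noncomputable def rho : LaurentTwo →+* LaurentPolynomial ℤ :=
  AddMonoidAlgebra.mapDomainRingHom ℤ (AddMonoidHom.fst ℤ ℤ)

namespace Finset

variable {G : Type*} [AddCommMonoid G] [LinearOrder G] [IsOrderedCancelAddMonoid G]
  {A B : Finset G}

theorem uniqueAdd_max' (hA : A.Nonempty) (hB : B.Nonempty) :
    UniqueAdd A B (A.max' hA) (B.max' hB) := by
  intro a b ha hb hab
  obtain hlt | heq := (A.le_max' a ha).lt_or_eq
  · exact absurd hab (add_lt_add_of_lt_of_le hlt (B.le_max' b hb)).ne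
  · exact ⟨heq, add_left_cancel (heq ▸ hab)⟩

theorem uniqueAdd_min' (hA : A.Nonempty) (hB : B.Nonempty) :
    UniqueAdd A B (A.min' hA) (B.min' hB) := by
  intro a b ha hb hab
  obtain hlt | heq := (A.min'_le a ha).lt_or_eq
  · exact absurd hab (add_lt_add_of_lt_of_le hlt (B.min'_le b hb)).ne'
  · exact ⟨heq.symm, add_left_cancel (heq ▸ hab)⟩

end Finset

namespace AddMonoidAlgebra

section LinearOrder

variable {R G : Type*} [Semiring R] [NoZeroDivisors R]
  [AddCommMonoid G] [LinearOrder G] [IsOrderedCancelAddMonoid G] {p q : R[G]}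

theorem max'_add_max'_mem_support_coeff_mul (hp : p.coeff.support.Nonempty)
    (hq : q.coeff.support.Nonempty) :
    p.coeff.support.max' hp + q.coeff.support.max' hq ∈ (p * q).coeff.support := by
  rw [Finsupp.mem_support_iff, coeff_mul_add_of_uniqueAdd (Finset.uniqueAdd_max' hp hq)]
  exact mul_ne_zero (Finsupp.mem_support_iff.1 (Finset.max'_mem _ hp))
    (Finsupp.mem_support_iff.1 (Finset.max'_mem _ hq))

theorem min'_add_min'_mem_support_coeff_mul (hp : p.coeff.support.Nonempty)
    (hq : q.coeff.support.Nonempty) :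
    p.coeff.support.min' hp + q.coeff.support.min' hq ∈ (p * q).coeff.support := by
  rw [Finsupp.mem_support_iff, coeff_mul_add_of_uniqueAdd (Finset.uniqueAdd_min' hp hq)]
  exact mul_ne_zero (Finsupp.mem_support_iff.1 (Finset.min'_mem _ hp))
    (Finsupp.mem_support_iff.1 (Finset.min'_mem _ hq))

theorem apply_eq_of_mem_support_coeff_of_mul_ne_zero {K : Type*} [AddCommMonoid K]
    [PartialOrder K] [IsOrderedCancelAddMonoid K] (φ : G →+o K) (hpq : p * q ≠ 0) {k : K}
    (h : ∀ x ∈ (p * q).coeff.support, φ x = k) {x y : G} (hx : x ∈ p.coeff.support)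
    (hy : y ∈ p.coeff.support) : φ x = φ y := by
  have hp : p.coeff.support.Nonempty := by simpa using left_ne_zero_of_mul hpq
  have hq : q.coeff.support.Nonempty := by simpa using right_ne_zero_of_mul hpq
  have hmax := h _ (max'_add_max'_mem_support_coeff_mul hp hq)
  have hmin := h _ (min'_add_min'_mem_support_coeff_mul hp hq)
  rw [map_add] at hmax hmin
  have hspread : φ (p.coeff.support.min' hp) = φ (p.coeff.support.max' hp) :=
    ((add_eq_add_iff_eq_and_eq (φ.monotone' (Finset.min'_le_max' _ hp))
      (φ.monotone' (Finset.min'_le_max' _ hq))).1 (hmin.trans hmax.symm)).1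
  have hconst : ∀ z ∈ p.coeff.support, φ z = φ (p.coeff.support.max' hp) := fun z hz =>
    le_antisymm (φ.monotone' (Finset.le_max' _ z hz))
      (hspread ▸ φ.monotone' (Finset.min'_le _ z hz))
  rw [hconst x hx, hconst y hy]

end LinearOrder

theorem apply_eq_of_mem_support_coeff_of_dvd {R G H K : Type*} [Semiring R] [NoZeroDivisors R]
    [AddCommMonoid G] [AddCommMonoid H] [LinearOrder H] [IsOrderedCancelAddMonoid H]
    [AddCommMonoid K] [PartialOrder K] [IsOrderedCancelAddMonoid K] (e : G ≃+ H) (φ : H →+o K)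
    {p f : R[G]} (hpf : p ∣ f) (hf : f ≠ 0) {k : K} (h : ∀ x ∈ f.coeff.support, φ (e x) = k)
    {x y : G} (hx : x ∈ p.coeff.support) (hy : y ∈ p.coeff.support) : φ (e x) = φ (e y) := by
  obtain ⟨q, rfl⟩ := hpf
  set E := mapDomainRingEquiv R e
  have hmem (r : R[G]) (z : G) : e z ∈ (E r).coeff.support ↔ z ∈ r.coeff.support := by
    simp [E, Finsupp.equivMapDomain_apply]
  refine apply_eq_of_mem_support_coeff_of_mul_ne_zero (p := E p) (q := E q) φ ?_ (k := k) ?_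
    ((hmem p x).2 hx) ((hmem p y).2 hy)
  · rwa [← map_mul, map_ne_zero_iff E E.injective]
  · intro z hz
    rw [← map_mul, ← e.apply_symm_apply z, hmem] at hz
    simpa using h _ hz

section Prod

variable {R A B : Type*} [Semiring R] [NoZeroDivisors R]
  [AddCommMonoid A] [LinearOrder A] [IsOrderedCancelAddMonoid A]
  [AddCommMonoid B] [LinearOrder B] [IsOrderedCancelAddMonoid B] {p f : R[A × B]}

theorem fst_eq_of_mem_support_coeff_of_dvd (hpf : p ∣ f) (hf : f ≠ 0) {a : A}
    (h : ∀ x ∈ f.coeff.support, x.1 = a) {x y : A × B} (hx : x ∈ p.coeff.support)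
    (hy : y ∈ p.coeff.support) : x.1 = y.1 :=
  apply_eq_of_mem_support_coeff_of_dvd (toLexAddEquiv (A × B)) (OrderAddMonoidHom.fstₗ A B)
    hpf hf h hx hy

theorem snd_eq_of_mem_support_coeff_of_dvd (hpf : p ∣ f) (hf : f ≠ 0) {b : B}
    (h : ∀ x ∈ f.coeff.support, x.2 = b) {x y : A × B} (hx : x ∈ p.coeff.support)
    (hy : y ∈ p.coeff.support) : x.2 = y.2 :=
  apply_eq_of_mem_support_coeff_of_dvd ((AddEquiv.prodComm).trans (toLexAddEquiv (B × A)))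
    (OrderAddMonoidHom.fstₗ B A) hpf hf h hx hy

theorem exists_eq_single_of_dvd_of_dvd {g : R[A × B]} (hpf : p ∣ f) (hpg : p ∣ g) (hf : f ≠ 0)
    (hg : g ≠ 0) {a : A} {b : B} (hfa : ∀ x ∈ f.coeff.support, x.1 = a)
    (hgb : ∀ x ∈ g.coeff.support, x.2 = b) : ∃ c r, p = single c r := by
  obtain ⟨c, hc⟩ : p.coeff.support.Nonempty := by simpa using ne_zero_of_dvd_ne_zero hf hpf
  obtain ⟨r, hr⟩ := Finsupp.support_subset_singleton'.1 fun x hx => Finset.mem_singleton.2 <|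
    Prod.ext (fst_eq_of_mem_support_coeff_of_dvd hpf hf hfa hx hc)
      (snd_eq_of_mem_support_coeff_of_dvd hpg hg hgb hx hc)
  exact ⟨c, r, coeff_injective hr⟩

end Prod

theorem isUnit_single_of_single_dvd {R G : Type*} [CommSemiring R] [AddCommGroup G] {c : G}
    {r : R} {f : R[G]} (hf : single c r ∣ f) {a : G} (ha : IsUnit (f.coeff a)) :
    IsUnit (single c r) := by
  obtain ⟨g, rfl⟩ := hf
  rw [coeff_single_mul_apply] at ha
  obtain ⟨u, rfl⟩ := isUnit_of_mul_isUnit_left ha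
  exact .of_mul_eq_one (single (-c) ↑u⁻¹) (by simp [single_mul_single, one_def])

section OneSubSingle

variable {R G : Type*} [Ring R] [AddZeroClass G] (a : G) (r : R)

theorem apply_eq_zero_of_mem_support_coeff_one_sub_single {K : Type*} [AddZeroClass K]
    (φ : G →+ K) (ha : φ a = 0) {x : G} (hx : x ∈ (1 - single a r).coeff.support) : φ x = 0 := by
  classical
  rw [coeff_sub, one_def, coeff_single, coeff_single] at hx
  rcases Finset.mem_union.1 (Finsupp.support_sub hx) with hx | hx
  · rw [Finset.mem_singleton.1 (Finsupp.support_single_subset hx), map_zero]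
  · rwa [Finset.mem_singleton.1 (Finsupp.support_single_subset hx)]

theorem coeff_one_sub_single_zero (ha : a ≠ 0) : (1 - single a r).coeff 0 = 1 := by
  simp [coeff_sub, one_def, coeff_single, ha.symm]

end OneSubSingle

end AddMonoidAlgebra

open AddMonoidAlgebra

namespace LaurentPolynomial

theorem not_isUnit_one_sub_T {R : Type*} [CommRing R] [Nontrivial R] (n : ℤ) :
    ¬IsUnit (1 - T n : R[T;T⁻¹]) := fun h => by
  simpa using h.map (eval₂ (RingHom.id R) 1)

end LaurentPolynomial

theorem rho_uVar : rho uVar = T 1 := mapDomain_single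

theorem rho_vVar : rho vVar = 1 := mapDomain_single

theorem isUnit_of_dvd_one_sub_uVar_of_dvd_one_sub_vVar {d : LaurentTwo} (hu : d ∣ 1 - uVar)
    (hv : d ∣ 1 - vVar) : IsUnit d := by
  have hu₀ : (1 - uVar).coeff 0 = 1 := coeff_one_sub_single_zero _ _ (by decide)
  have hv₀ : (1 - vVar).coeff 0 = 1 := coeff_one_sub_single_zero _ _ (by decide)
  have hfst : ∀ x ∈ (1 - vVar).coeff.support, x.1 = 0 := fun _ =>
    apply_eq_zero_of_mem_support_coeff_one_sub_single _ _ (AddMonoidHom.fst ℤ ℤ) rfl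
  have hsnd : ∀ x ∈ (1 - uVar).coeff.support, x.2 = 0 := fun _ =>
    apply_eq_zero_of_mem_support_coeff_one_sub_single _ _ (AddMonoidHom.snd ℤ ℤ) rfl
  obtain ⟨c, r, rfl⟩ := exists_eq_single_of_dvd_of_dvd hv hu
    (fun h => by simp [h] at hv₀) (fun h => by simp [h] at hu₀) hfst hsnd
  exact isUnit_single_of_single_dvd hu (a := 0) (hu₀ ▸ isUnit_one)

/-- Every common divisor of `1 - uv` and `1 - u` in `ℤ[u^{±1}, v^{±1}]` is a unit
(so their gcd is `1`), yet `ρ` sends both to `1 - w`, which is not a unit of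
`ℤ[w^{±1}]` (so the gcd of the images is `1 - w`): the image of the gcd is a
proper divisor of the gcd of the images. -/
theorem rho_gcd_not_preserved :
    (∀ d : LaurentTwo, d ∣ (1 - uVar * vVar) → d ∣ (1 - uVar) → IsUnit d) ∧
    rho (1 - uVar * vVar) = 1 - T 1 ∧
    rho (1 - uVar) = 1 - T 1 ∧
    ¬ IsUnit (1 - T 1 : LaurentPolynomial ℤ) := by
  refine ⟨fun d huv hu => ?_, by simp [rho_uVar, rho_vVar], by simp [rho_uVar],
    not_isUnit_one_sub_T 1⟩
  have hv : d ∣ 1 - vVar := by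
    rw [show (1 : LaurentTwo) - vVar = (1 - uVar * vVar) - vVar * (1 - uVar) by ring]
    exact dvd_sub huv (dvd_mul_of_dvd_right hu _)
  exact isUnit_of_dvd_one_sub_uVar_of_dvd_one_sub_vVar hu hv
end

section
/- Let R and S be integral domains each equipped with a GCD monoid structure, let ρ : R → S be a ring homomorphism, let A be a matrix over R with finite index types, and let k be a natural number. Suppose d ∈ R is a greatest common divisor of the family of k×k minors of A (the determinants det(A.submatrix e f) over all injective e : Fin k → rows and f : Fin k → columns), and d' ∈ S is a greatest common divisor of the family of k×k minors of the entrywise image matrix ρ(A). Then ρ(d) divides d'. -/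
theorem RingHom.map_dvd_det_submatrix_map {R S : Type*} [CommRing R] [CommRing S] (ρ : R →+* S)
    {m n : Type*} (A : Matrix m n R) {k : ℕ} (e : Fin k → m) (f : Fin k → n) {c : R}
    (h : c ∣ (A.submatrix e f).det) : ρ c ∣ ((A.map ρ).submatrix e f).det :=
  ρ.map_det (A.submatrix e f) ▸ map_dvd ρ h

theorem ringHom_gcd_of_minors_dvd_general
    {R S : Type*} [CommRing R]
    [CommRing S]
    (ρ : R →+* S)
    {m n : Type*}
    (A : Matrix m n R) (k : ℕ) (d : R) (d' : S)
    (hd_dvd : ∀ (e : Fin k → m) (f : Fin k → n),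
        Function.Injective e → Function.Injective f →
        d ∣ (A.submatrix e f).det)
    (hd'_great : ∀ c : S,
        (∀ (e : Fin k → m) (f : Fin k → n),
            Function.Injective e → Function.Injective f →
            c ∣ ((A.map ρ).submatrix e f).det) → c ∣ d') :
    ρ d ∣ d' :=
  hd'_great (ρ d) fun e f he hf => ρ.map_dvd_det_submatrix_map A e f (hd_dvd e f he hf)

/-- If `d` is a greatest common divisor of the `k × k` minors of a matrix `A` over `R`
and `d'` is a greatest common divisor of the `k × k` minors of the entrywise image
`ρ(A)` over `S`, then `ρ(d)` divides `d'`: the image of a Fitting invariant divides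
the Fitting invariant of the reduced module. -/
theorem ringHom_gcd_of_minors_dvd
    {R S : Type*} [CommRing R] [IsDomain R] [GCDMonoid R]
    [CommRing S] [IsDomain S] [GCDMonoid S]
    (ρ : R →+* S)
    {m n : Type*} [Fintype m] [Fintype n]
    (A : Matrix m n R) (k : ℕ) (d : R) (d' : S)
    (hd_dvd : ∀ (e : Fin k → m) (f : Fin k → n),
        Function.Injective e → Function.Injective f →
        d ∣ (A.submatrix e f).det)
    (hd_great : ∀ c : R,
        (∀ (e : Fin k → m) (f : Fin k → n),
            Function.Injective e → Function.Injective f →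
            c ∣ (A.submatrix e f).det) → c ∣ d)
    (hd'_dvd : ∀ (e : Fin k → m) (f : Fin k → n),
        Function.Injective e → Function.Injective f →
        d' ∣ ((A.map ρ).submatrix e f).det)
    (hd'_great : ∀ c : S,
        (∀ (e : Fin k → m) (f : Fin k → n),
            Function.Injective e → Function.Injective f →
            c ∣ ((A.map ρ).submatrix e f).det) → c ∣ d') :
    ρ d ∣ d' :=
  ringHom_gcd_of_minors_dvd_general ρ A k d d' hd_dvd hd'_great
end

section
/- Let G be a finite connected simple graph, R a commutative ring, N an R-module, and D a function from the edge set of G to N such that for every vertex v of G and every edge e of G incident to v, the element D(e) lies in the R-submodule of N generated by the values D(e') over all edges e' ≠ e of G incident to v. Then for every spanning tree T of G (a connected acyclic subgraph containing all vertices of G whose edges are edges of G), the R-submodule of N generated by the values of D on the edges of G not in T equals the R-submodule generated by the values of D on all edges of G. -/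
/-!
Prune leaves. At a leaf `v` of a forest `T ≤ G` with tree edge `e₀`, every other `G`-edge at
`v` lies outside `T`, so the hypothesis at `v` puts `D e₀` in the span of the non-tree values.
Hence deleting `e₀` from `T` does not change the span of the non-tree values, and by
induction on `T` we reach the empty forest, whose non-tree edges are all edges of `G`.
-/

open Submodule

namespace SimpleGraph

variable {V : Type*} {G T : SimpleGraph V}

theorem IsAcyclic.exists_existsUnique_adj [Finite V] (hT : T.IsAcyclic) (hne : T ≠ ⊥) :
    ∃ v, ∃! w, T.Adj v w := by
  obtain ⟨a, b, hab⟩ : ∃ a b, T.Adj a b := by simpa [eq_bot_iff_forall_not_adj] using hne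
  have : Nonempty V := ⟨a⟩
  obtain ⟨u, v, p, hp, hmax⟩ := Walk.exists_isPath_forall_isPath_length_le_length T
  have hnil : ¬p.Nil := by
    rw [← Walk.length_eq_zero_iff]
    have := hmax a b (.cons hab .nil) (by simp [hab.ne])
    simp only [Walk.length_cons, Walk.length_nil] at this
    omega
  refine ⟨u, p.snd, p.adj_snd hnil, fun w hw ↦ hT.eq_snd_of_adj_start hp hw ?_⟩
  by_contra hw'
  have := hmax _ _ (p.cons hw.symm) (hp.cons hw')
  simp at this

lemma eq_mk_of_mem_edgeSet_of_mem {v w : V} (hw : ∀ u, T.Adj v u → u = w) {e : Sym2 V}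
    (he : e ∈ T.edgeSet) (hv : v ∈ e) : e = s(v, w) := by
  obtain ⟨u, rfl⟩ := Sym2.mem_iff_exists.mp hv
  rw [hw u he]

lemma edgeSet_diff_deleteEdges_singleton {e : Sym2 V} (he : e ∈ G.edgeSet) :
    G.edgeSet \ (T.deleteEdges {e}).edgeSet = insert e (G.edgeSet \ T.edgeSet) := by
  ext x
  by_cases hx : x = e <;> simp [edgeSet_deleteEdges, hx, he]

variable {R N : Type*} [Semiring R] [AddCommMonoid N] [Module R N] {D : Sym2 V → N}

theorem span_image_edgeSet_diff_of_isAcyclic [Finite V]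
    (hD : ∀ v : V, ∀ e ∈ G.edgeSet, v ∈ e →
      D e ∈ span R (D '' {e' | e' ∈ G.edgeSet ∧ e' ≠ e ∧ v ∈ e'}))
    (hle : T ≤ G) (hT : T.IsAcyclic) :
    span R (D '' (G.edgeSet \ T.edgeSet)) = span R (D '' G.edgeSet) := by
  induction T using WellFoundedLT.induction with
  | ind T ih =>
  obtain rfl | hne := eq_or_ne T ⊥
  · simp
  obtain ⟨v, w, hvw, hw⟩ := hT.exists_existsUnique_adj hne
  have he : s(v, w) ∈ T.edgeSet := hvw
  have hlt : T.deleteEdges {s(v, w)} < T :=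
    edgeSet_ssubset_edgeSet.mp <| by
      rw [edgeSet_deleteEdges]
      exact Set.sdiff_singleton_ssubset.mpr he
  have hleaf : D s(v, w) ∈ span R (D '' (G.edgeSet \ T.edgeSet)) := by
    refine span_mono (Set.image_mono ?_) (hD v _ (hle he) (Sym2.mem_mk_left v w))
    rintro e ⟨heG, hne, hv⟩
    exact ⟨heG, fun heT ↦ hne (eq_mk_of_mem_edgeSet_of_mem hw heT hv)⟩
  rw [← ih _ hlt (hlt.le.trans hle) (hT.anti hlt.le), edgeSet_diff_deleteEdges_singleton (hle he),
    Set.image_insert_eq, span_insert_eq_span hleaf]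

end SimpleGraph

theorem nontree_edges_span_general {V : Type*} [Fintype V] (G : SimpleGraph V)
    {R : Type*} [CommRing R]
    {N : Type*} [AddCommGroup N] [Module R N] (D : Sym2 V → N)
    (hD : ∀ v : V, ∀ e ∈ G.edgeSet, v ∈ e →
      D e ∈ Submodule.span R (D '' {e' | e' ∈ G.edgeSet ∧ e' ≠ e ∧ v ∈ e'})) :
    ∀ T : SimpleGraph V, T ≤ G → T.IsTree →
      Submodule.span R (D '' {e | e ∈ G.edgeSet ∧ e ∉ T.edgeSet})
        = Submodule.span R (D '' G.edgeSet) :=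
  fun _ hle hT ↦ SimpleGraph.span_image_edgeSet_diff_of_isAcyclic hD hle hT.isAcyclic

/-- If, at every vertex `v` of a finite connected simple graph `G`, the value of `D`
on each edge incident to `v` lies in the span of the values of `D` on the other edges
incident to `v`, then for any spanning tree `T` of `G` the values of `D` on the
non-tree edges span the same submodule as the values of `D` on all edges. -/
theorem nontree_edges_span {V : Type*} [Fintype V] (G : SimpleGraph V)
    (hG : G.Connected) {R : Type*} [CommRing R]
    {N : Type*} [AddCommGroup N] [Module R N] (D : Sym2 V → N)
    (hD : ∀ v : V, ∀ e ∈ G.edgeSet, v ∈ e →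
      D e ∈ Submodule.span R (D '' {e' | e' ∈ G.edgeSet ∧ e' ≠ e ∧ v ∈ e'})) :
    ∀ T : SimpleGraph V, T ≤ G → T.IsTree →
      Submodule.span R (D '' {e | e ∈ G.edgeSet ∧ e ∉ T.edgeSet})
        = Submodule.span R (D '' G.edgeSet) :=
  nontree_edges_span_general G D hD
end
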